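/- Let 1 ≤ p ≤ 2, let t > 0, let m be a positive integer, and let w_1, …, w_m ≥ 0 be nonnegative reals. Then the kernel K(x, z) := exp( −t ( ∑_{e=1}^m w_e |x_e − z_e|^p )^{1/p} ) on ℝ^m is positive definite: for every integer n ≥ 1, all x^{(1)}, …, x^{(n)} ∈ ℝ^m and all c_1, …, c_n ∈ ℝ, one has ∑_{i=1}^n ∑_{j=1}^n c_i c_j exp( −t ( ∑_{e=1}^m w_e |x^{(i)}_e − x^{(j)}_e|^p )^{1/p} ) ≥ 0. -/

import Mathlib

/-!
By Schoenberg's theorem, `exp (-t N)` is positive definite for every `t ≥ 0` as soon as `N` is a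
symmetric, conditionally negative definite kernel vanishing on the diagonal: `-N` differs from a
positive definite kernel by terms of the form `f a + f b`, and positive definite kernels are
closed under `exp` by the Schur product theorem. Moreover, Bochner's subordination formula
`a ^ β = C⁻¹ ∫₀^∞ (1 - exp (-s a)) s ^ (-1-β) ds` shows that `N ^ β` is again conditionally
negative definite for `0 < β ≤ 1`. Starting from `(u - v) ^ 2`, this gives `|u - v| ^ p` for
`p ≤ 2`, hence the weighted sum `∑ w_e |x_e - z_e| ^ p`, hence its power `1 / p`.
-/

open MeasureTheory Set Matrix

open scoped Nat

def IsPosDefKernel {α : Type*} (K : α → α → ℝ) : Prop :=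
  ∀ (n : ℕ) (x : Fin n → α) (c : Fin n → ℝ), 0 ≤ ∑ i, ∑ j, c i * c j * K (x i) (x j)

def IsCondNegDefKernel {α : Type*} (N : α → α → ℝ) : Prop :=
  ∀ (n : ℕ) (x : Fin n → α) (c : Fin n → ℝ), ∑ i, c i = 0 →
    ∑ i, ∑ j, c i * c j * N (x i) (x j) ≤ 0

lemma Matrix.dotProduct_mulVec_self_eq_sum_sum {ι R : Type*} [Fintype ι] [CommSemiring R]
    (M : Matrix ι ι R) (c : ι → R) : c ⬝ᵥ (M *ᵥ c) = ∑ i, ∑ j, c i * c j * M i j := by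
  simp only [dotProduct, Matrix.mulVec, Finset.mul_sum]
  exact Finset.sum_congr rfl fun i _ => Finset.sum_congr rfl fun j _ => by ring

lemma Finset.sum_sum_mul_const_mul {ι R : Type*} [Fintype ι] [CommSemiring R] (c : ι → R)
    (M : ι → ι → R) (r : R) :
    ∑ i, ∑ j, c i * c j * (r * M i j) = r * ∑ i, ∑ j, c i * c j * M i j := by
  simp only [Finset.mul_sum]
  exact Finset.sum_congr rfl fun i _ => Finset.sum_congr rfl fun j _ => by ring

section PosDef

variable {α : Type*} {K L : α → α → ℝ}

lemma isPosDefKernel_one : IsPosDefKernel fun _ _ : α => (1 : ℝ) := fun n x c => by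
  simpa [← Finset.sum_mul_sum] using mul_self_nonneg (∑ i, c i)

lemma IsPosDefKernel.const_mul (hK : IsPosDefKernel K) {r : ℝ} (hr : 0 ≤ r) :
    IsPosDefKernel fun a b => r * K a b := fun n x c => by
  rw [Finset.sum_sum_mul_const_mul]
  exact mul_nonneg hr (hK n x c)

lemma IsPosDefKernel.mul_mul (hK : IsPosDefKernel K) (f : α → ℝ) :
    IsPosDefKernel fun a b => f a * K a b * f b := fun n x c => by
  convert hK n x (fun i => c i * f (x i)) using 2 with i _ j
  refine Finset.sum_congr rfl fun j _ => ?_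
  ring

lemma IsPosDefKernel.posSemidef (hK : IsPosDefKernel K) (hKs : ∀ a b, K a b = K b a)
    {n : ℕ} (x : Fin n → α) : (Matrix.of fun i j => K (x i) (x j)).PosSemidef := by
  refine .of_dotProduct_mulVec_nonneg (Matrix.IsHermitian.ext fun i j => hKs _ _) fun c => ?_
  simpa [Matrix.dotProduct_mulVec_self_eq_sum_sum] using hK n x c

lemma IsPosDefKernel.mul (hK : IsPosDefKernel K) (hL : IsPosDefKernel L)
    (hKs : ∀ a b, K a b = K b a) (hLs : ∀ a b, L a b = L b a) :
    IsPosDefKernel fun a b => K a b * L a b := fun n x c => by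
  simpa [Matrix.dotProduct_mulVec_self_eq_sum_sum] using
    ((hK.posSemidef hKs x).hadamard (hL.posSemidef hLs x)).dotProduct_mulVec_nonneg c

lemma IsPosDefKernel.pow (hK : IsPosDefKernel K) (hKs : ∀ a b, K a b = K b a) (k : ℕ) :
    IsPosDefKernel fun a b => K a b ^ k := by
  induction k with
  | zero => simpa using isPosDefKernel_one
  | succ k ih => simpa only [pow_succ] using ih.mul hK (fun a b => by rw [hKs]) hKs

lemma IsPosDefKernel.exp (hK : IsPosDefKernel K) (hKs : ∀ a b, K a b = K b a) :
    IsPosDefKernel fun a b => Real.exp (K a b) := fun n x c => by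
  have hsum : HasSum (fun k : ℕ => ∑ i, ∑ j, c i * c j * ((k ! : ℝ)⁻¹ * K (x i) (x j) ^ k))
      (∑ i, ∑ j, c i * c j * Real.exp (K (x i) (x j))) :=
    hasSum_sum fun i _ => hasSum_sum fun j _ => by
      simpa [Real.exp_eq_exp_ℝ, div_eq_inv_mul] using
        (NormedSpace.expSeries_div_hasSum_exp (K (x i) (x j))).mul_left (c i * c j)
  exact hsum.nonneg fun k => (hK.pow hKs k).const_mul (by positivity) n x c

end PosDef

section IntegralRepresentation

variable {β : ℝ}

lemma integrableOn_one_sub_exp_neg_mul_mul_rpow (h0 : 0 < β) (h1 : β < 1) {a : ℝ} (ha : 0 ≤ a) :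
    IntegrableOn (fun s => (1 - Real.exp (-(a * s))) * s ^ (-1 - β)) (Ioi 0) := by
  have hcont : ContinuousOn (fun s => (1 - Real.exp (-(a * s))) * s ^ (-1 - β)) (Ioi 0) :=
    (Continuous.continuousOn (by fun_prop)).mul
      (continuousOn_id.rpow_const fun s hs => Or.inl (ne_of_gt hs))
  have hbound {s : ℝ} (hs : 0 < s) (g : ℝ) (hg : 1 - Real.exp (-(a * s)) ≤ g) :
      ‖(1 - Real.exp (-(a * s))) * s ^ (-1 - β)‖ ≤ g * s ^ (-1 - β) := by
    have hexp : Real.exp (-(a * s)) ≤ 1 := Real.exp_le_one_iff.2 (neg_nonpos.2 (by positivity))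
    rw [Real.norm_of_nonneg (mul_nonneg (sub_nonneg.2 hexp) (Real.rpow_nonneg hs.le _))]
    exact mul_le_mul_of_nonneg_right hg (Real.rpow_nonneg hs.le _)
  rw [← Ioc_union_Ioi_eq_Ioi zero_le_one]
  refine IntegrableOn.union ?_ ?_
  · have hint : IntegrableOn (fun s : ℝ => a * s ^ (-β)) (Ioc 0 1) := by
      have := intervalIntegral.intervalIntegrable_rpow' (a := 0) (b := 1) (neg_lt_neg h1)
      rw [intervalIntegrable_iff, uIoc_of_le zero_le_one] at this
      exact this.const_mul a
    refine hint.mono' ((hcont.mono Ioc_subset_Ioi_self).aestronglyMeasurable measurableSet_Ioc)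
      ((ae_restrict_iff' measurableSet_Ioc).2 (.of_forall fun s hs => ?_))
    have hs : 0 < s := hs.1
    calc _ ≤ (a * s) * s ^ (-1 - β) :=
          hbound hs (a * s) (by linarith [Real.add_one_le_exp (-(a * s))])
      _ = a * s ^ (-β) := by
        rw [mul_assoc, ← Real.rpow_one_add' hs.le (show 1 + (-1 - β) ≠ 0 by intro h; linarith)]
        ring_nf
  · refine (integrableOn_Ioi_rpow_of_lt (show -1 - β < -1 by linarith) one_pos).mono'
      ((hcont.mono (Ioi_subset_Ioi zero_le_one)).aestronglyMeasurable measurableSet_Ioi)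
      ((ae_restrict_iff' measurableSet_Ioi).2 (.of_forall fun s hs => ?_))
    simpa using hbound (zero_lt_one.trans hs) 1 (by linarith [Real.exp_pos (-(a * s))])

lemma integral_one_sub_exp_neg_mul_mul_rpow (h0 : 0 < β) {a : ℝ} (ha : 0 ≤ a) :
    ∫ s in Ioi 0, (1 - Real.exp (-(a * s))) * s ^ (-1 - β)
      = a ^ β * ∫ s in Ioi 0, (1 - Real.exp (-s)) * s ^ (-1 - β) := by
  rcases ha.eq_or_lt with rfl | ha
  · simp [Real.zero_rpow h0.ne']
  have hscale : EqOn (fun s => (1 - Real.exp (-(a * s))) * s ^ (-1 - β))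
      (fun s => a ^ (1 + β) * ((1 - Real.exp (-(a * s))) * (a * s) ^ (-1 - β))) (Ioi 0) := by
    intro s hs
    have hcancel : a ^ (1 + β) * a ^ (-1 - β) = 1 := by
      rw [← Real.rpow_add ha]; norm_num
    dsimp only
    rw [Real.mul_rpow ha.le (le_of_lt hs)]
    linear_combination (-(1 - Real.exp (-(a * s))) * s ^ (-1 - β)) * hcancel
  rw [setIntegral_congr_fun measurableSet_Ioi hscale, integral_const_mul,
    integral_comp_mul_left_Ioi (fun y => (1 - Real.exp (-y)) * y ^ (-1 - β)) 0 ha, mul_zero,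
    smul_eq_mul, ← mul_assoc, Real.rpow_add ha, Real.rpow_one]
  field_simp

lemma integral_one_sub_exp_neg_mul_rpow_pos (h0 : 0 < β) (h1 : β < 1) :
    0 < ∫ s in Ioi 0, (1 - Real.exp (-s)) * s ^ (-1 - β) := by
  have hint := integrableOn_one_sub_exp_neg_mul_mul_rpow h0 h1 zero_le_one
  simp only [one_mul] at hint
  have hpos : ∀ s ∈ Ioi (0 : ℝ), 0 < (1 - Real.exp (-s)) * s ^ (-1 - β) := fun s hs =>
    mul_pos (by linarith [Real.exp_lt_one_iff.2 (neg_lt_zero.2 hs)]) (Real.rpow_pos_of_pos hs _)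
  rw [setIntegral_pos_iff_support_of_nonneg_ae
    ((ae_restrict_iff' measurableSet_Ioi).2 (.of_forall fun s hs => (hpos s hs).le)) hint]
  calc (0 : ENNReal) < volume (Ioi (0 : ℝ)) := by simp
    _ ≤ _ := measure_mono
      (subset_inter (fun s hs => Function.mem_support.2 (hpos s hs).ne') subset_rfl)

end IntegralRepresentation

section CondNegDef

variable {α : Type*} {N : α → α → ℝ}

lemma IsCondNegDefKernel.nonneg (hN : IsCondNegDefKernel N) (hNs : ∀ a b, N a b = N b a)
    (hN0 : ∀ a, N a a = 0) (a b : α) : 0 ≤ N a b := by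
  simpa [Fin.sum_univ_two, hN0, hNs b a] using hN 2 ![a, b] ![1, -1] (by simp)

/-- Apply conditional negative definiteness to the family extended by `x₀`, with weight `-∑ c`. -/
lemma IsCondNegDefKernel.isPosDefKernel_sub (hN : IsCondNegDefKernel N) (hN0 : ∀ a, N a a = 0)
    (x₀ : α) : IsPosDefKernel fun a b => N a x₀ + N x₀ b - N a b := fun n x c => by
  have h := hN (n + 1) (Fin.cons x₀ x) (Fin.cons (-∑ i, c i) c) (by simp [Fin.sum_univ_succ])
  simp only [Fin.sum_univ_succ, Fin.cons_zero, Fin.cons_succ, hN0, mul_zero, zero_add] at h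
  have hleft : ∑ i, ∑ j, c i * c j * N (x i) x₀ = ∑ i, (c i * ∑ j, c j) * N (x i) x₀ := by
    simp only [Finset.mul_sum, Finset.sum_mul]
  have hright : ∑ i, ∑ j, c i * c j * N x₀ (x j) = ∑ j, (∑ i, c i) * c j * N x₀ (x j) := by
    rw [Finset.sum_comm]
    simp only [Finset.sum_mul]
  simp only [mul_add, mul_sub, Finset.sum_add_distrib, Finset.sum_sub_distrib, hleft, hright]
  simp only [mul_neg, neg_mul, Finset.sum_neg_distrib, Finset.sum_add_distrib] at h
  linarith

/-- Schoenberg: `exp (-t N) = f a · exp (t (N a x₀ + N x₀ b - N a b)) · f b` with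
`f a = exp (-t N a x₀)`. -/
theorem IsCondNegDefKernel.isPosDefKernel_exp_neg_mul (hN : IsCondNegDefKernel N)
    (hNs : ∀ a b, N a b = N b a) (hN0 : ∀ a, N a a = 0) {t : ℝ} (ht : 0 ≤ t) :
    IsPosDefKernel fun a b => Real.exp (-(t * N a b)) := by
  intro n x c
  obtain _ | n := n
  · simp
  set x₀ := x 0
  have hM := (((hN.isPosDefKernel_sub hN0 x₀).const_mul ht).exp fun a b => by
    rw [hNs a x₀, hNs x₀ b, hNs a b]; ring).mul_mul fun a => Real.exp (-(t * N a x₀))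
  refine (hM _ x c).trans_eq (Finset.sum_congr rfl fun i _ => Finset.sum_congr rfl fun j _ => ?_)
  dsimp only
  rw [← Real.exp_add, ← Real.exp_add, hNs (x j) x₀]
  ring_nf

lemma IsCondNegDefKernel.comp {β : Type*} (hN : IsCondNegDefKernel N) (f : β → α) :
    IsCondNegDefKernel fun a b => N (f a) (f b) := fun n x c => hN n (f ∘ x) c

lemma IsCondNegDefKernel.const_mul (hN : IsCondNegDefKernel N) {r : ℝ} (hr : 0 ≤ r) :
    IsCondNegDefKernel fun a b => r * N a b := fun n x c hc => by
  rw [Finset.sum_sum_mul_const_mul]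
  exact mul_nonpos_of_nonneg_of_nonpos hr (hN n x c hc)

lemma isCondNegDefKernel_sum {ι : Type*} (s : Finset ι) {N : ι → α → α → ℝ}
    (hN : ∀ e ∈ s, IsCondNegDefKernel (N e)) :
    IsCondNegDefKernel fun a b => ∑ e ∈ s, N e a b := fun n x c hc => by
  calc ∑ i, ∑ j, c i * c j * ∑ e ∈ s, N e (x i) (x j)
      = ∑ i, ∑ e ∈ s, ∑ j, c i * c j * N e (x i) (x j) :=
        Finset.sum_congr rfl fun i _ => by simp only [Finset.mul_sum]; exact Finset.sum_comm
    _ = ∑ e ∈ s, ∑ i, ∑ j, c i * c j * N e (x i) (x j) := Finset.sum_comm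
    _ ≤ 0 := Finset.sum_nonpos fun e he => hN e he n x c hc

lemma isCondNegDefKernel_sq_sub : IsCondNegDefKernel fun u v : ℝ => (u - v) ^ 2 := by
  intro n x c hc
  have expand : ∀ i j, c i * c j * (x i - x j) ^ 2
      = c i * x i ^ 2 * c j + c i * (c j * x j ^ 2) - 2 * (c i * x i * (c j * x j)) := by
    intro i j; ring
  simp only [expand, Finset.sum_add_distrib, Finset.sum_sub_distrib, ← Finset.mul_sum,
    ← Finset.sum_mul, hc]
  nlinarith [sq_nonneg (∑ i, c i * x i)]

end CondNegDef


section CondNegDef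

variable {α : Type*} {N : α → α → ℝ}

/-- Bochner subordination: `N ^ β = C⁻¹ ∫₀^∞ (1 - exp (-s N)) s ^ (-1-β) ds`, and the integrand is
conditionally negative definite by Schoenberg's theorem. -/
theorem IsCondNegDefKernel.rpow (hN : IsCondNegDefKernel N) (hNs : ∀ a b, N a b = N b a)
    (hN0 : ∀ a, N a a = 0) {β : ℝ} (h0 : 0 < β) (h1 : β ≤ 1) :
    IsCondNegDefKernel fun a b => N a b ^ β := by
  rcases h1.eq_or_lt with rfl | h1
  · simpa using hN
  intro n x c hc
  set C := ∫ s in Ioi 0, (1 - Real.exp (-s)) * s ^ (-1 - β)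
  set g : Fin n → Fin n → ℝ → ℝ :=
    fun i j s => (1 - Real.exp (-(N (x i) (x j) * s))) * s ^ (-1 - β)
  have hg (i j : Fin n) : IntegrableOn (g i j) (Ioi 0) :=
    integrableOn_one_sub_exp_neg_mul_mul_rpow h0 h1 (hN.nonneg hNs hN0 _ _)
  have hrepr : C * ∑ i, ∑ j, c i * c j * N (x i) (x j) ^ β
      = ∫ s in Ioi 0, ∑ i, ∑ j, c i * c j * g i j s := by
    rw [integral_finsetSum _ fun i _ => integrable_finsetSum _ fun j _ => (hg i j).const_mul _,
      Finset.mul_sum]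
    refine Finset.sum_congr rfl fun i _ => ?_
    rw [integral_finsetSum _ fun j _ => (hg i j).const_mul _, Finset.mul_sum]
    refine Finset.sum_congr rfl fun j _ => ?_
    rw [integral_const_mul, integral_one_sub_exp_neg_mul_mul_rpow h0 (hN.nonneg hNs hN0 _ _)]
    ring
  have hneg : ∫ s in Ioi 0, ∑ i, ∑ j, c i * c j * g i j s ≤ 0 := by
    refine setIntegral_nonpos measurableSet_Ioi fun s hs => ?_
    have hsplit (i j : Fin n) : c i * c j * g i j s
        = (c i * c j - c i * c j * Real.exp (-(s * N (x i) (x j)))) * s ^ (-1 - β) := by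
      simp only [g, mul_comm s]
      ring
    simp only [hsplit, ← Finset.sum_mul, Finset.sum_sub_distrib, ← Finset.sum_mul_sum, hc,
      zero_mul, zero_sub]
    exact mul_nonpos_of_nonpos_of_nonneg
      (neg_nonpos.2 (hN.isPosDefKernel_exp_neg_mul hNs hN0 (le_of_lt hs) n x c))
      (Real.rpow_nonneg (le_of_lt hs) _)
  exact nonpos_of_mul_nonpos_right (hrepr ▸ hneg) (integral_one_sub_exp_neg_mul_rpow_pos h0 h1)

end CondNegDef

lemma isCondNegDefKernel_abs_sub_rpow {p : ℝ} (hp0 : 0 < p) (hp2 : p ≤ 2) :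
    IsCondNegDefKernel fun u v : ℝ => |u - v| ^ p := by
  have hsq : (fun u v : ℝ => |u - v| ^ p) = fun u v => ((u - v) ^ 2) ^ (p / 2) := by
    funext u v
    rw [← sq_abs, ← Real.rpow_natCast_mul (abs_nonneg _)]
    ring_nf
  rw [hsq]
  exact isCondNegDefKernel_sq_sub.rpow (fun u v => by ring) (fun u => by ring)
    (half_pos hp0) (by linarith)

theorem exp_neg_weighted_lp_dist_positive_definite_general
    (p : ℝ) (hp1 : 1 ≤ p) (hp2 : p ≤ 2)
    (t : ℝ) (ht : 0 < t)
    (m : ℕ) (w : Fin m → ℝ) (hw : ∀ e, 0 ≤ w e) :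
    ∀ (n : ℕ), 1 ≤ n → ∀ (x : Fin n → Fin m → ℝ) (c : Fin n → ℝ),
      0 ≤ ∑ i, ∑ j, c i * c j *
        Real.exp (-(t * (∑ e, w e * |x i e - x j e| ^ p) ^ (1 / p))) := by
  intro n _ x c
  have hp0 : 0 < p := by linarith
  let N := fun a b : Fin m → ℝ => ∑ e, w e * |a e - b e| ^ p
  have hNs (a b : Fin m → ℝ) : N a b = N b a := Finset.sum_congr rfl fun e _ => by rw [abs_sub_comm]
  have hN0 (a : Fin m → ℝ) : N a a = 0 := by simp [N, Real.zero_rpow hp0.ne']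
  have hN : IsCondNegDefKernel N := isCondNegDefKernel_sum Finset.univ fun e _ =>
    ((isCondNegDefKernel_abs_sub_rpow hp0 hp2).comp fun a : Fin m → ℝ => a e).const_mul (hw e)
  have hNp := hN.rpow hNs hN0 (one_div_pos.2 hp0) (div_le_one_of_le₀ hp1 hp0.le)
  exact hNp.isPosDefKernel_exp_neg_mul (fun a b => by rw [hNs])
    (fun a => by rw [hN0, Real.zero_rpow (one_div_pos.2 hp0).ne']) ht.le n x c

/-- For `1 ≤ p ≤ 2`, `t > 0` and nonnegative weights, the kernel
`(x, z) ↦ exp(-t (∑_e w_e |x_e - z_e|^p)^{1/p})` on `ℝ^m` is positive definite. -/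
theorem exp_neg_weighted_lp_dist_positive_definite
    (p : ℝ) (hp1 : 1 ≤ p) (hp2 : p ≤ 2)
    (t : ℝ) (ht : 0 < t)
    (m : ℕ) (hm : 0 < m) (w : Fin m → ℝ) (hw : ∀ e, 0 ≤ w e) :
    ∀ (n : ℕ), 1 ≤ n → ∀ (x : Fin n → Fin m → ℝ) (c : Fin n → ℝ),
      0 ≤ ∑ i, ∑ j, c i * c j *
        Real.exp (-(t * (∑ e, w e * |x i e - x j e| ^ p) ^ (1 / p))) :=
  exp_neg_weighted_lp_dist_positive_definite_general p hp1 hp2 t ht m w hw
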